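/- Let T: Z_p → Z_p be (p^{-k}, p^k) locally scaling. Then T is mixing with respect to the Haar probability measure μ on Z_p: for all μ-measurable sets U, V, lim_{n→∞} μ(T^{-n}(U) ∩ V) = μ(U)·μ(V). -/

import Mathlib

/-!
On a closed ball `B` of radius `p ^ (-n k)` the iterate `T^[n]` multiplies all distances by
`p ^ (n k)`; after rescaling `B` onto `ℤ_[p]` it is an isometry of a compact space, hence onto.
So `T^[n]` maps `B` onto `ℤ_[p]` sending sub-balls to balls `p ^ (n k)` times larger, which
means `p ^ (n k) • (μ.restrict B).map T^[n] = μ`, i.e. `μ (T^[n] ⁻¹' U ∩ B) = μ U * μ B`.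
Summing over balls, `μ (T^[n] ⁻¹' U ∩ W) = μ U * μ W` holds exactly for every union
`W = toZModPow M ⁻¹' S` of balls of radius `p ^ (-M)` as soon as `M ≤ n k`, and by regularity of
`μ` every measurable `V` is approximated in measure by such a union.
-/

open MeasureTheory

variable {p : ℕ} [hp : Fact p.Prime]

noncomputable instance : MeasurableSpace ℤ_[p] := borel _
instance : BorelSpace ℤ_[p] := ⟨rfl⟩

open Metric Set Filter Topology Function
open scoped ENNReal symmDiff

theorem pow_mul_zpow_neg_add {G₀ : Type*} [GroupWithZero G₀] {a : G₀} (ha : a ≠ 0) (k m : ℕ) :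
    a ^ k * a ^ (-((m + k : ℕ) : ℤ)) = a ^ (-(m : ℤ)) := by
  rw [← zpow_natCast, ← zpow_add₀ ha]
  congr 1
  push_cast
  ring

theorem Isometry.surjective_of_compactSpace {X : Type*} [MetricSpace X] [CompactSpace X]
    {f : X → X} (hf : Isometry f) : Surjective f := by
  intro y
  by_contra hy
  have hpos : 0 < infDist y (range f) :=
    ((isCompact_range hf.continuous).isClosed.notMem_iff_infDist_pos ⟨f y, y, rfl⟩).1
      (by simpa using hy)
  obtain ⟨a, -, φ, hφ, hlim⟩ :=
    isCompact_univ.tendsto_subseq (x := fun n => f^[n] y) fun _ => trivial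
  obtain ⟨N, hN⟩ := Metric.cauchySeq_iff.1 hlim.cauchySeq _ hpos
  have hiter : ∀ n, Isometry f^[n] := fun n => Nat.rec isometry_id (fun _ h => h.comp hf) n
  obtain ⟨d, hd⟩ : ∃ d, φ (N + 1) = φ N + (d + 1) := ⟨φ (N + 1) - φ N - 1, by
    have := hφ (lt_add_one N); omega⟩
  have hclose : dist (f^[d + 1] y) y < infDist y (range f) := by
    have := hN (N + 1) N.le_succ N le_rfl
    rwa [comp_apply, comp_apply, hd, iterate_add_apply, (hiter _).dist_eq] at this
  rw [iterate_succ_apply', dist_comm] at hclose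
  exact (infDist_le_dist_of_mem (mem_range_self _)).not_gt hclose

theorem tendsto_measure_inter_of_forall_exists_measure_symmDiff_lt {α ι : Type*}
    [MeasurableSpace α] {μ : Measure α} {l : Filter ι} {A : ι → Set α} {V : Set α}
    {c : ℝ≥0∞} (hc : c ≤ 1) (hV : μ V ≠ ∞)
    (h : ∀ ε ≠ 0, ∃ W, μ (V ∆ W) < ε ∧ ∀ᶠ i in l, μ (A i ∩ W) = c * μ W) :
    Tendsto (fun i => μ (A i ∩ V)) l (𝓝 (c * μ V)) := by
  have hsymm (s t : Set α) : μ s ≤ μ t + μ (s ∆ t) := tsub_le_iff_left.1 le_measure_symmDiff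
  have hinter (B s t : Set α) : (B ∩ s) ∆ (B ∩ t) ⊆ s ∆ t :=
    inter_symmDiff_distrib_left B s t ▸ inter_subset_right
  have hcmul (a b : ℝ≥0∞) : c * (a + b) ≤ c * a + b := by
    rw [mul_add]
    exact add_le_add_right (mul_le_of_le_one_left bot_le hc) _
  rw [ENNReal.tendsto_nhds (ENNReal.mul_ne_top (hc.trans_lt ENNReal.one_lt_top).ne hV)]
  intro ε hε
  obtain ⟨W, hVW, hW⟩ := h (ε / 2) (ENNReal.half_pos hε.ne').ne'
  filter_upwards [hW] with i hi
  constructor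
  · refine tsub_le_iff_right.2 ?_
    calc c * μ V ≤ c * (μ W + μ (V ∆ W)) := by gcongr; exact hsymm V W
      _ ≤ μ (A i ∩ W) + μ (V ∆ W) := hi ▸ hcmul _ _
      _ ≤ μ (A i ∩ V) + μ ((A i ∩ W) ∆ (A i ∩ V)) + μ (V ∆ W) := by gcongr; exact hsymm _ _
      _ ≤ μ (A i ∩ V) + ε / 2 + ε / 2 := by
        gcongr
        exact (measure_mono (hinter _ _ _)).trans (symmDiff_comm V W ▸ hVW.le)
      _ = μ (A i ∩ V) + ε := by rw [add_assoc, ENNReal.add_halves]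
  · calc μ (A i ∩ V) ≤ μ (A i ∩ W) + μ ((A i ∩ V) ∆ (A i ∩ W)) := hsymm _ _
      _ ≤ c * (μ V + μ (W ∆ V)) + μ (V ∆ W) := by
        rw [hi]; gcongr
        · exact hsymm W V
        · exact hinter _ _ _
      _ ≤ c * μ V + ε / 2 + ε / 2 := by
        grw [hcmul, symmDiff_comm W V, hVW]
      _ = c * μ V + ε := by rw [add_assoc, ENNReal.add_halves]

namespace PadicInt

theorem toZModPow_eq_iff_norm_sub_le (N : ℕ) (x y : ℤ_[p]) :
    toZModPow N x = toZModPow N y ↔ ‖x - y‖ ≤ (p : ℝ) ^ (-(N : ℤ)) := by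
  rw [← sub_eq_zero, ← map_sub, ← RingHom.mem_ker, ker_toZModPow, norm_le_pow_iff_mem_span_pow]

theorem preimage_toZModPow_singleton (N : ℕ) (x : ℤ_[p]) :
    toZModPow N ⁻¹' {toZModPow N x} = closedBall x ((p : ℝ) ^ (-(N : ℤ))) := by
  ext y
  rw [mem_preimage, mem_singleton_iff, toZModPow_eq_iff_norm_sub_le, mem_closedBall, dist_eq_norm]

theorem preimage_toZModPow_of_le {M N : ℕ} (h : M ≤ N) (S : Set (ZMod (p ^ M))) :
    toZModPow M ⁻¹' S = toZModPow N ⁻¹' (ZMod.castHom (pow_dvd_pow p h) _ ⁻¹' S) := by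
  rw [← zmod_cast_comp_toZModPow M N h, RingHom.coe_comp, preimage_comp]

theorem closedBall_pow_neg_zero_eq_univ (x : ℤ_[p]) :
    closedBall x ((p : ℝ) ^ (-((0 : ℕ) : ℤ))) = univ :=
  eq_univ_of_forall fun y => by simpa [dist_eq_norm] using norm_le_one (y - x)

def closedBalls (p : ℕ) [Fact p.Prime] : Set (Set ℤ_[p]) :=
  {s | ∃ (x : ℤ_[p]) (m : ℕ), s = closedBall x ((p : ℝ) ^ (-(m : ℤ)))}

theorem isPiSystem_closedBalls : IsPiSystem (closedBalls p) := by
  rintro _ ⟨x, m, rfl⟩ _ ⟨y, l, rfl⟩ hne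
  rcases IsUltrametricDist.closedBall_subset_trichotomy (x := x) (y := y)
    (r := (p : ℝ) ^ (-(m : ℤ))) (s := (p : ℝ) ^ (-(l : ℤ))) with h | h | h
  · exact ⟨x, m, inter_eq_left.2 h⟩
  · exact ⟨y, l, inter_eq_right.2 h⟩
  · exact absurd h (not_disjoint_iff_nonempty_inter.2 hne)

theorem isTopologicalBasis_closedBalls : TopologicalSpace.IsTopologicalBasis (closedBalls p) := by
  refine TopologicalSpace.isTopologicalBasis_of_isOpen_of_nhds ?_ fun x u hx hu => ?_
  · rintro _ ⟨x, m, rfl⟩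
    exact IsUltrametricDist.isOpen_closedBall x (zpow_pos (by exact_mod_cast hp.out.pos) _).ne'
  · obtain ⟨ε, hε, hball⟩ := Metric.isOpen_iff.1 hu x hx
    obtain ⟨m, hm⟩ := exists_pow_neg_lt p hε
    exact ⟨_, ⟨x, m, rfl⟩, mem_closedBall_self (zpow_pos (by exact_mod_cast hp.out.pos) _).le,
      (closedBall_subset_ball hm).trans hball⟩

theorem ext_of_measure_closedBall {μ ν : Measure ℤ_[p]} [IsFiniteMeasure μ]
    (h : ∀ (x : ℤ_[p]) (m : ℕ), μ (closedBall x ((p : ℝ) ^ (-(m : ℤ)))) =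
      ν (closedBall x ((p : ℝ) ^ (-(m : ℤ))))) : μ = ν := by
  refine ext_of_generate_finite _ isTopologicalBasis_closedBalls.borel_eq_generateFrom
    isPiSystem_closedBalls (fun _ ⟨x, m, hs⟩ => hs ▸ h x m) ?_
  rw [← closedBall_pow_neg_zero_eq_univ 0]
  exact h 0 0

theorem norm_p_pow_mul_le (k : ℕ) (z : ℤ_[p]) : ‖(p : ℤ_[p]) ^ k * z‖ ≤ (p : ℝ) ^ (-(k : ℤ)) := by
  rw [norm_mul, norm_p_pow]
  exact mul_le_of_le_one_right (zpow_nonneg (Nat.cast_nonneg p) _) (norm_le_one z)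

theorem measurableSet_preimage_toZModPow (N : ℕ) (S : Set (ZMod (p ^ N))) :
    MeasurableSet (toZModPow N ⁻¹' S) := by
  rw [← biUnion_preimage_singleton]
  refine S.toFinite.measurableSet_biUnion fun s _ => ?_
  obtain ⟨x, rfl⟩ := ZMod.ringHom_surjective (toZModPow N) s
  rw [preimage_toZModPow_singleton]
  exact measurableSet_closedBall

theorem exists_measure_symmDiff_preimage_toZModPow_lt {μ : Measure ℤ_[p]} [IsFiniteMeasure μ]
    {V : Set ℤ_[p]} (hV : MeasurableSet V) {ε : ℝ≥0∞} (hε : ε ≠ 0) :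
    ∃ (M : ℕ) (S : Set (ZMod (p ^ M))), μ (V ∆ (toZModPow M ⁻¹' S)) < ε := by
  obtain ⟨K, hKV, hK, hVK⟩ := hV.exists_isClosed_sdiff_lt (measure_ne_top μ V)
    (ENNReal.half_pos hε).ne'
  obtain ⟨O, hVO, hO, -, hOV⟩ := hV.exists_isOpen_sdiff_lt (measure_ne_top μ V)
    (ENNReal.half_pos hε).ne'
  obtain ⟨δ, hδ, hKδ⟩ := hK.isCompact.exists_thickening_subset_open hO (hKV.trans hVO)
  obtain ⟨M, hM⟩ := exists_pow_neg_lt p hδ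
  have hWO : toZModPow M ⁻¹' (toZModPow M '' K) ⊆ O := by
    rintro y ⟨x, hx, hxy⟩
    refine hKδ (mem_thickening_iff.2 ⟨x, hx, ?_⟩)
    rw [dist_eq_norm]
    exact ((toZModPow_eq_iff_norm_sub_le M y x).1 hxy.symm).trans_lt hM
  refine ⟨M, toZModPow M '' K, ?_⟩
  calc μ (V ∆ (toZModPow M ⁻¹' (toZModPow M '' K)))
      ≤ μ ((V \ K) ∪ (O \ V)) :=
        measure_mono (union_subset_union (sdiff_subset_sdiff_right (subset_preimage_image _ _))
          (sdiff_subset_sdiff_left hWO))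
    _ ≤ μ (V \ K) + μ (O \ V) := measure_union_le _ _
    _ < ε / 2 + ε / 2 := ENNReal.add_lt_add hVK hOV
    _ = ε := ENNReal.add_halves ε

end PadicInt

open PadicInt

def MeasuresBallsByRadius (μ : Measure ℤ_[p]) : Prop :=
  ∀ (x : ℤ_[p]) (m : ℕ),
    μ (closedBall x ((p : ℝ) ^ (-(m : ℤ)))) = ENNReal.ofReal ((p : ℝ) ^ (-(m : ℤ)))

namespace MeasuresBallsByRadius

variable {μ : Measure ℤ_[p]}

theorem measure_closedBall (hμ : MeasuresBallsByRadius μ) (x : ℤ_[p]) (m : ℕ) :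
    μ (closedBall x ((p : ℝ) ^ (-(m : ℤ)))) = ((p : ℝ≥0∞) ^ m)⁻¹ := by
  have hp0 : (0 : ℝ) < p := by exact_mod_cast hp.out.pos
  rw [hμ, zpow_neg, zpow_natCast, ENNReal.ofReal_inv_of_pos (by positivity),
    ENNReal.ofReal_pow (Nat.cast_nonneg p), ENNReal.ofReal_natCast]

theorem isProbabilityMeasure (hμ : MeasuresBallsByRadius μ) : IsProbabilityMeasure μ :=
  ⟨by rw [← closedBall_pow_neg_zero_eq_univ 0, hμ.measure_closedBall]; simp⟩

end MeasuresBallsByRadius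

def IsLocallyScaling (k : ℕ) (T : ℤ_[p] → ℤ_[p]) : Prop :=
  ∀ x y : ℤ_[p], ‖x - y‖ ≤ (p : ℝ) ^ (-(k : ℤ)) → ‖T x - T y‖ = (p : ℝ) ^ k * ‖x - y‖

namespace IsLocallyScaling

variable {k : ℕ} {T : ℤ_[p] → ℤ_[p]}

theorem continuous (hT : IsLocallyScaling k T) : Continuous T := by
  have hp0 : (0 : ℝ) < p := by exact_mod_cast hp.out.pos
  refine (Metric.uniformContinuous_iff.2 fun ε hε => ?_).continuous
  refine ⟨min ((p : ℝ) ^ (-(k : ℤ))) (ε / (p : ℝ) ^ k), by positivity, fun {a b} hab => ?_⟩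
  rw [dist_eq_norm] at hab ⊢
  rw [hT a b (hab.le.trans (min_le_left _ _)), ← lt_div_iff₀' (by positivity)]
  exact hab.trans_le (min_le_right _ _)

theorem iterate (hT : IsLocallyScaling k T) (n : ℕ) : IsLocallyScaling (n * k) T^[n] := by
  have hp0 : (p : ℝ) ≠ 0 := by exact_mod_cast hp.out.ne_zero
  induction n with
  | zero => intro x y _; simp
  | succ n ih =>
    intro x y hxy
    rw [add_one_mul] at hxy ⊢
    have hxy' : ‖x - y‖ ≤ (p : ℝ) ^ (-(k : ℤ)) :=
      hxy.trans (zpow_le_zpow_right₀ (by exact_mod_cast hp.out.one_le) (by omega))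
    have hTxy : ‖T x - T y‖ ≤ (p : ℝ) ^ (-((n * k : ℕ) : ℤ)) := by
      rw [hT x y hxy', ← pow_mul_zpow_neg_add hp0]
      exact mul_le_mul_of_nonneg_left hxy (by positivity)
    rw [iterate_succ_apply, iterate_succ_apply, ih _ _ hTxy, hT x y hxy', ← mul_assoc, pow_add]

theorem isometry_comp_affine (hT : IsLocallyScaling k T) (c : ℤ_[p]) :
    Isometry fun z => T (c + (p : ℤ_[p]) ^ k * z) := by
  have hp0 : (p : ℝ) ≠ 0 := by exact_mod_cast hp.out.ne_zero
  refine Isometry.of_dist_eq fun a b => ?_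
  have hdiff :
      c + (p : ℤ_[p]) ^ k * a - (c + (p : ℤ_[p]) ^ k * b) = (p : ℤ_[p]) ^ k * (a - b) := by
    ring
  rw [dist_eq_norm, dist_eq_norm, hT _ _ (hdiff ▸ norm_p_pow_mul_le k _), hdiff, norm_mul,
    norm_p_pow, ← mul_assoc, ← zpow_natCast, ← zpow_add₀ hp0, add_neg_cancel, zpow_zero, one_mul]

theorem surjOn_closedBall (hT : IsLocallyScaling k T) (c : ℤ_[p]) :
    SurjOn T (closedBall c ((p : ℝ) ^ (-(k : ℤ)))) univ := by
  intro y _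
  obtain ⟨z, rfl⟩ := (hT.isometry_comp_affine c).surjective_of_compactSpace y
  refine ⟨c + (p : ℤ_[p]) ^ k * z, ?_, rfl⟩
  rw [mem_closedBall, dist_eq_norm, add_sub_cancel_left]
  exact norm_p_pow_mul_le k z

theorem closedBall_inter_preimage_closedBall (hT : IsLocallyScaling k T) {c x : ℤ_[p]}
    (hx : x ∈ closedBall c ((p : ℝ) ^ (-(k : ℤ)))) (m : ℕ) :
    closedBall c ((p : ℝ) ^ (-(k : ℤ))) ∩ T ⁻¹' closedBall (T x) ((p : ℝ) ^ (-(m : ℤ))) =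
      closedBall x ((p : ℝ) ^ (-((m + k : ℕ) : ℤ))) := by
  have hp0 : (p : ℝ) ≠ 0 := by exact_mod_cast hp.out.ne_zero
  ext y
  simp only [mem_inter_iff, mem_preimage, IsUltrametricDist.closedBall_eq_of_mem hx,
    mem_closedBall, dist_eq_norm]
  constructor
  · rintro ⟨hyx, hTyx⟩
    rwa [hT y x hyx, ← pow_mul_zpow_neg_add hp0 k m, mul_le_mul_iff_right₀ (by positivity)]
      at hTyx
  · intro hyx
    have hyx' : ‖y - x‖ ≤ (p : ℝ) ^ (-(k : ℤ)) :=
      hyx.trans (zpow_le_zpow_right₀ (by exact_mod_cast hp.out.one_le) (by omega))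
    refine ⟨hyx', ?_⟩
    rw [hT y x hyx', ← pow_mul_zpow_neg_add hp0 k m]
    exact mul_le_mul_of_nonneg_left hyx (by positivity)

variable {μ : Measure ℤ_[p]} {U : Set ℤ_[p]}

theorem measure_preimage_inter_closedBall (hT : IsLocallyScaling k T)
    (hμ : MeasuresBallsByRadius μ) (hU : MeasurableSet U) (c : ℤ_[p]) :
    μ (T ⁻¹' U ∩ closedBall c ((p : ℝ) ^ (-(k : ℤ)))) =
      μ U * μ (closedBall c ((p : ℝ) ^ (-(k : ℤ)))) := by
  have := hμ.isProbabilityMeasure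
  have hpk : (p : ℝ≥0∞) ^ k ≠ 0 := pow_ne_zero _ (by exact_mod_cast hp.out.ne_zero)
  have hpk' : (p : ℝ≥0∞) ^ k ≠ ∞ := ENNReal.pow_ne_top (ENNReal.natCast_ne_top p)
  have hmeas := hT.continuous.measurable
  have hmap :
      μ = (p : ℝ≥0∞) ^ k • (μ.restrict (closedBall c ((p : ℝ) ^ (-(k : ℤ))))).map T := by
    refine ext_of_measure_closedBall fun y m => ?_
    obtain ⟨x, hx, rfl⟩ := hT.surjOn_closedBall c (mem_univ y)
    rw [Measure.smul_apply, Measure.map_apply hmeas measurableSet_closedBall,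
      Measure.restrict_apply' measurableSet_closedBall, inter_comm,
      hT.closedBall_inter_preimage_closedBall hx, hμ.measure_closedBall, hμ.measure_closedBall,
      smul_eq_mul, pow_add, ENNReal.mul_inv (Or.inr hpk') (Or.inr hpk), mul_left_comm,
      ENNReal.mul_inv_cancel hpk hpk', mul_one]
  have hU' := congrArg (· U) hmap
  simp only [Measure.smul_apply, Measure.map_apply hmeas hU, Measure.restrict_apply (hmeas hU),
    smul_eq_mul] at hU'
  rw [hμ.measure_closedBall, hU', mul_comm, ← mul_assoc, ENNReal.inv_mul_cancel hpk hpk', one_mul]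

theorem measure_preimage_inter_preimage_toZModPow (hT : IsLocallyScaling k T)
    (hμ : MeasuresBallsByRadius μ) (hU : MeasurableSet U) {M : ℕ} (hM : M ≤ k)
    (S : Set (ZMod (p ^ M))) :
    μ (T ⁻¹' U ∩ toZModPow M ⁻¹' S) = μ U * μ (toZModPow M ⁻¹' S) := by
  classical
  rw [preimage_toZModPow_of_le hM]
  generalize ZMod.castHom (pow_dvd_pow p hM) (ZMod (p ^ M)) ⁻¹' S = S'
  have hfibre (ν : Measure ℤ_[p]) : ν (toZModPow k ⁻¹' S') =
      ∑ s ∈ S'.toFinset, ν (toZModPow k ⁻¹' {s}) := by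
    rw [sum_measure_preimage_singleton _ fun s _ => measurableSet_preimage_toZModPow k {s},
      coe_toFinset]
  rw [inter_comm, ← Measure.restrict_apply (measurableSet_preimage_toZModPow k S'), hfibre,
    hfibre, Finset.mul_sum]
  refine Finset.sum_congr rfl fun s _ => ?_
  obtain ⟨x, rfl⟩ := ZMod.ringHom_surjective (toZModPow k) s
  rw [Measure.restrict_apply (measurableSet_preimage_toZModPow k _), inter_comm,
    preimage_toZModPow_singleton]
  exact hT.measure_preimage_inter_closedBall hμ hU x

end IsLocallyScaling

/-- a `(p^{-k}, p^k)` locally scaling map is mixing for the Haar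
probability measure on `ℤ_p` (the measure assigning each closed ball its radius). -/
theorem locallyScaling_mixing (k : ℕ) (hk : 1 ≤ k) (T : ℤ_[p] → ℤ_[p])
    (hT : ∀ x y : ℤ_[p], ‖x - y‖ ≤ (p : ℝ) ^ (-(k : ℤ)) →
      ‖T x - T y‖ = (p : ℝ) ^ (k : ℕ) * ‖x - y‖)
    (μ : Measure ℤ_[p])
    (hμ : ∀ (x : ℤ_[p]) (m : ℕ),
      μ (Metric.closedBall x ((p : ℝ) ^ (-(m : ℤ)))) = ENNReal.ofReal ((p : ℝ) ^ (-(m : ℤ))))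
    (U V : Set ℤ_[p]) (hU : MeasurableSet U) (hV : MeasurableSet V) :
    Filter.Tendsto (fun n => μ ((T^[n]) ⁻¹' U ∩ V)) Filter.atTop
      (nhds (μ U * μ V)) := by
  have hT : IsLocallyScaling k T := hT
  have hμ : MeasuresBallsByRadius μ := hμ
  have := hμ.isProbabilityMeasure
  refine tendsto_measure_inter_of_forall_exists_measure_symmDiff_lt prob_le_one
    (measure_ne_top μ V) fun ε hε => ?_
  obtain ⟨M, S, hS⟩ := exists_measure_symmDiff_preimage_toZModPow_lt (μ := μ) hV hε
  refine ⟨_, hS, eventually_atTop.2 ⟨M, fun n hn => ?_⟩⟩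
  exact (hT.iterate n).measure_preimage_inter_preimage_toZModPow hμ hU
    (hn.trans (Nat.le_mul_of_pos_right n hk)) S
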